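/- arXiv:1007.4350 — 3 statements merged into one kernel-verified Lean document; each statement's English description precedes it below -/
import Mathlib

section
/- (Abramson square-root law bias cancellation.) Let f be twice continuously differentiable with f(t) > 0, let K be a C² even density supported in [-T,T], and B ≥ T/f(t)^{1/2}. Define g_{t,w}(u) = f(t+u)^{3/2} K(w·f(t+u)^{1/2}). Then ∫_{-B}^{B} w² g_{t,w}''(0) dw = 0, where g'' is the second derivative in u. -/
open MeasureTheory intervalIntegral

/-- A continuous function vanishing on `(T, ∞)` vanishes on `[T, ∞)`. -/
lemma cont_zero_of_gt {g : ℝ → ℝ} (hg : Continuous g) {T : ℝ}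
    (h : ∀ z, T < z → g z = 0) : ∀ y, T ≤ y → g y = 0 := by
  intro y hy
  rcases lt_or_eq_of_le hy with hlt | heq
  · exact h y hlt
  · subst heq
    have h1 : Filter.Tendsto g (nhdsWithin T (Set.Ioi T)) (nhds (g T)) :=
      (hg.tendsto T).mono_left nhdsWithin_le_nhds
    have h2 : Filter.Tendsto g (nhdsWithin T (Set.Ioi T)) (nhds 0) := by
      apply Filter.Tendsto.congr' _ tendsto_const_nhds
      filter_upwards [self_mem_nhdsWithin] with z hz
      exact (h z hz).symm
    exact tendsto_nhds_unique h1 h2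

/-- Abramson square-root law bias cancellation: with
`g_{t,w}(u) = f(t+u)^{3/2} K(w f(t+u)^{1/2})`, one has
`∫_{-B}^{B} w² g_{t,w}''(0) dw = 0`. -/
theorem abramson_second_order_bias_cancellation (f K : ℝ → ℝ) (T t B : ℝ)
    (hf : ContDiff ℝ 2 f) (hft : 0 < f t)
    (hK : ContDiff ℝ 2 K) (hKeven : ∀ x, K (-x) = K x)
    (hKpos : ∀ x, 0 ≤ K x) (hKint : ∫ x, K x = 1)
    (hKsupp : Function.support K ⊆ Set.Icc (-T) T)
    (hB : T / Real.sqrt (f t) ≤ B) :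
    ∫ w in (-B)..B,
      w ^ 2 *
        iteratedDeriv 2
          (fun u => (f (t + u)) ^ ((3:ℝ)/2) * K (w * Real.sqrt (f (t + u)))) 0
      = 0 := by
  have hs : 0 < Real.sqrt (f t) := Real.sqrt_pos.mpr hft
  set s := Real.sqrt (f t) with hs_def
  have hTs : T ≤ B * s := (div_le_iff₀ hs).mp hB
  have hsne : s ≠ 0 := ne_of_gt hs
  -- regularity facts about K
  have hK2 : ContDiff ℝ (1 + 1) K := by norm_num; exact hK
  obtain ⟨Kd1, -, hK1⟩ := contDiff_succ_iff_deriv.mp hK2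
  have Kd2 : Differentiable ℝ (deriv K) := hK1.differentiable one_ne_zero
  have Kc2 : Continuous (deriv (deriv K)) := hK1.continuous_deriv le_rfl
  have hKd : ∀ x, HasDerivAt K (deriv K x) x := fun x => (Kd1 x).hasDerivAt
  have hKdd : ∀ x, HasDerivAt (deriv K) (deriv (deriv K) x) x := fun x => (Kd2 x).hasDerivAt
  -- vanishing of K and deriv K beyond T
  have hKzero : ∀ y, T ≤ y → K y = 0 := by
    apply cont_zero_of_gt hK.continuous
    intro z hz
    by_contra hne
    have := hKsupp (Function.mem_support.mpr hne)
    exact absurd this.2 (not_le.mpr hz)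
  have hKzero' : ∀ y, T ≤ y → deriv K y = 0 := by
    apply cont_zero_of_gt hK1.continuous
    intro z hz
    have hev : K =ᶠ[nhds z] (fun _ => (0:ℝ)) := by
      filter_upwards [Ioi_mem_nhds hz] with y hy
      exact hKzero y (le_of_lt hy)
    rw [hev.deriv_eq, deriv_const]
  have hKneg : ∀ y, y ≤ -T → K y = 0 := fun y hy => by
    rw [← hKeven]; exact hKzero (-y) (by linarith)
  have hKodd : ∀ y, deriv K (-y) = - deriv K y := by
    intro y
    have hKe : (fun x => K (-x)) = K := funext hKeven
    have h1 : HasDerivAt (fun x => K (-x)) (deriv K (-y) * (-1)) y :=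
      (hKd (-y)).comp y (hasDerivAt_neg y)
    rw [hKe] at h1
    have := h1.deriv
    linarith [this]
  have hKneg' : ∀ y, y ≤ -T → deriv K y = 0 := fun y hy => by
    have : deriv K (-(-y)) = - deriv K (-y) := hKodd (-y)
    rw [neg_neg] at this
    rw [this, hKzero' (-y) (by linarith), neg_zero]
  -- open set where f (t + u) > 0
  have hUopen : IsOpen {u : ℝ | 0 < f (t + u)} :=
    isOpen_lt continuous_const (hf.continuous.comp (continuous_const.add continuous_id))
  have hU0 : (0:ℝ) ∈ {u : ℝ | 0 < f (t + u)} := by simpa using hft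
  -- the square-root function and its derivatives
  set q : ℝ → ℝ := fun u => Real.sqrt (f (t + u)) with hq_def
  set q1 : ℝ → ℝ := fun u => deriv f (t + u) * (1 / (2 * q u)) with hq1_def
  have hfd : Differentiable ℝ f := hf.differentiable two_ne_zero
  have hinner : ∀ u : ℝ, HasDerivAt (fun u => f (t + u)) (deriv f (t + u)) u := by
    intro u
    have h := ((hfd (t + u)).hasDerivAt).comp u ((hasDerivAt_id u).const_add t)
    exact h.congr_deriv (mul_one _)
  have hq : ∀ u ∈ {u : ℝ | 0 < f (t + u)}, HasDerivAt q (q1 u) u := by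
    intro u hu
    have h2 := (Real.hasDerivAt_sqrt (ne_of_gt hu)).comp u (hinner u)
    refine h2.congr_deriv ?_
    simp only [hq1_def, hq_def]
    ring
  have hq0 : q 0 = s := by simp [hq_def, hs_def]
  have hqd0 : HasDerivAt q (q1 0) 0 := hq 0 hU0
  have hq1diff : DifferentiableAt ℝ q1 0 := by
    have h1 : DifferentiableAt ℝ (fun u => deriv f (t + u)) 0 := by
      have hdf : Differentiable ℝ (deriv f) := by
        have hf2 : ContDiff ℝ (1 + 1) f := by norm_num; exact hf
        obtain ⟨-, -, h⟩ := contDiff_succ_iff_deriv.mp hf2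
        exact h.differentiable one_ne_zero
      exact (hdf _).comp 0 ((differentiable_const t).add differentiable_id).differentiableAt
    have h2 : DifferentiableAt ℝ q 0 := hqd0.differentiableAt
    apply h1.mul
    apply DifferentiableAt.div (differentiableAt_const _)
      ((differentiableAt_const _).mul h2)
    show (2:ℝ) * q 0 ≠ 0
    rw [hq0]; positivity
  set p := q1 0 with hp_def
  set c := deriv q1 0 with hc_def
  have hq1d : HasDerivAt q1 c 0 := hq1diff.hasDerivAt
  -- the key pointwise computation of the second derivative
  have key : ∀ w : ℝ,
      iteratedDeriv 2
          (fun u => (f (t + u)) ^ ((3:ℝ)/2) * K (w * Real.sqrt (f (t + u)))) 0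
      = (6*s*p^2 + 3*s^2*c) * K (w*s) + (6*s^2*p^2 + s^3*c) * (w * deriv K (w*s))
          + s^3*p^2 * (w^2 * deriv (deriv K) (w*s)) := by
    intro w
    set g : ℝ → ℝ := fun u => (f (t + u)) ^ ((3:ℝ)/2) * K (w * Real.sqrt (f (t + u))) with hg_def
    set D1 : ℝ → ℝ := fun u =>
      3*(q u)^2 * q1 u * K (w * q u) + (q u)^3 * (w * q1 u) * deriv K (w * q u) with hD1_def
    have hgG : ∀ u ∈ {u:ℝ | 0 < f (t+u)}, g u = (q u)^3 * K (w * q u) := by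
      intro u hu
      have hx : (0:ℝ) ≤ f (t+u) := le_of_lt hu
      have hrw : (f (t+u)) ^ ((3:ℝ)/2) = (Real.sqrt (f (t+u)))^3 := by
        rw [Real.sqrt_eq_rpow, ← Real.rpow_natCast ((f (t+u)) ^ ((1:ℝ)/2)) 3,
          ← Real.rpow_mul hx]
        norm_num
      simp only [hg_def, hq_def, hrw]
    have hGd : ∀ u ∈ {u:ℝ | 0 < f (t+u)},
        HasDerivAt (fun u => (q u)^3 * K (w * q u)) (D1 u) u := by
      intro u hu
      have h1 := hq u hu
      have h2 : HasDerivAt (fun u => (q u)^3) (3*(q u)^2 * q1 u) u := by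
        have := h1.pow 3
        exact this.congr_deriv (by push_cast; ring)
      have h3 : HasDerivAt (fun u => K (w * q u)) (deriv K (w * q u) * (w * q1 u)) u :=
        (hKd (w * q u)).comp u (h1.const_mul w)
      have := h2.mul h3
      exact this.congr_deriv (by simp only [hD1_def]; ring)
    have hderiv_g : ∀ u ∈ {u:ℝ | 0 < f (t+u)}, deriv g u = D1 u := by
      intro u hu
      have hg_ev : g =ᶠ[nhds u] (fun u => (q u)^3 * K (w * q u)) := by
        filter_upwards [hUopen.mem_nhds hu] with z hz
        exact hgG z hz
      exact ((hGd u hu).congr_of_eventuallyEq hg_ev).deriv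
    -- derivative of D1 at 0
    have hA1 : HasDerivAt (fun u => 3*(q u)^2 * q1 u) (6*s*p*p + 3*s^2*c) 0 := by
      have h1 : HasDerivAt (fun u => 3*(q u)^2) (3*(2*(q 0)^1*(q1 0))) 0 :=
        (hqd0.pow 2).const_mul 3
      have := h1.mul hq1d
      refine this.congr_deriv ?_
      rw [hq0]
      ring
    have hA2 : HasDerivAt (fun u => K (w * q u)) (deriv K (w*s) * (w*p)) 0 := by
      have := (hKd (w * q 0)).comp 0 (hqd0.const_mul w)
      rw [hq0] at this
      exact this
    have hA3 : HasDerivAt (fun u => (q u)^3 * (w * q1 u)) (3*s^2*p*(w*p) + s^3*(w*c)) 0 := by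
      have h2 : HasDerivAt (fun u => (q u)^3) (3*(q 0)^2 * q1 0) 0 := by
        have := hqd0.pow 3
        exact this.congr_deriv (by push_cast; ring)
      have := h2.mul (hq1d.const_mul w)
      exact this.congr_deriv (by simp only [hq0]; ring)
    have hA4 : HasDerivAt (fun u => deriv K (w * q u)) (deriv (deriv K) (w*s) * (w*p)) 0 := by
      have := (hKdd (w * q 0)).comp 0 (hqd0.const_mul w)
      rw [hq0] at this
      exact this
    have hD1d : HasDerivAt D1
        ((6*s*p^2 + 3*s^2*c) * K (w*s) + (6*s^2*p^2 + s^3*c) * (w * deriv K (w*s))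
          + s^3*p^2 * (w^2 * deriv (deriv K) (w*s))) 0 := by
      have := (hA1.mul hA2).add (hA3.mul hA4)
      refine this.congr_deriv ?_
      simp only [hq0, hp_def]
      ring
    have e1 : deriv (deriv g) 0 = deriv D1 0 := by
      apply Filter.EventuallyEq.deriv_eq
      filter_upwards [hUopen.mem_nhds hU0] with z hz
      exact hderiv_g z hz
    calc iteratedDeriv 2 g 0 = deriv (deriv g) 0 := by
          rw [show (2:ℕ) = 1 + 1 from rfl, iteratedDeriv_succ, iteratedDeriv_one]
      _ = deriv D1 0 := e1
      _ = _ := hD1d.deriv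
  -- now compute the integral
  simp only [key]
  have hcK : Continuous fun w : ℝ => K (w * s) :=
    hK.continuous.comp (continuous_id.mul continuous_const)
  have hcK1 : Continuous fun w : ℝ => deriv K (w * s) :=
    hK1.continuous.comp (continuous_id.mul continuous_const)
  have hcK2 : Continuous fun w : ℝ => deriv (deriv K) (w * s) :=
    Kc2.comp (continuous_id.mul continuous_const)
  have i2 : IntervalIntegrable (fun w : ℝ => w^2 * K (w*s)) volume (-B) B :=
    ((continuous_pow 2).mul hcK).intervalIntegrable _ _
  have i3 : IntervalIntegrable (fun w : ℝ => w^3 * deriv K (w*s)) volume (-B) B :=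
    ((continuous_pow 3).mul hcK1).intervalIntegrable _ _
  have i4 : IntervalIntegrable (fun w : ℝ => w^4 * deriv (deriv K) (w*s)) volume (-B) B :=
    ((continuous_pow 4).mul hcK2).intervalIntegrable _ _
  have hBs1 : K (B*s) = 0 := hKzero _ hTs
  have hBs2 : K (-B*s) = 0 := by rw [neg_mul]; exact hKneg _ (by linarith)
  have hBs3 : deriv K (B*s) = 0 := hKzero' _ hTs
  have hBs4 : deriv K (-B*s) = 0 := by rw [neg_mul]; exact hKneg' _ (by linarith)
  -- first integration by parts
  have ibp1 : (∫ w in (-B)..B, w^3 * deriv K (w*s))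
      = -(3 * s⁻¹) * ∫ w in (-B)..B, w^2 * K (w*s) := by
    have hu : ∀ x ∈ Set.uIcc (-B) B, HasDerivAt (fun w : ℝ => w^3 * s⁻¹) (3*x^2 * s⁻¹) x := by
      intro x _
      have := (hasDerivAt_pow 3 x).mul_const s⁻¹
      exact this.congr_deriv (by push_cast; ring)
    have hv : ∀ x ∈ Set.uIcc (-B) B, HasDerivAt (fun w : ℝ => K (w*s)) (deriv K (x*s) * s) x :=
      fun x _ => ((hKd (x*s)).comp x ((hasDerivAt_id x).mul_const s)).congr_deriv (by ring)
    have hint1 : IntervalIntegrable (fun x : ℝ => 3*x^2 * s⁻¹) volume (-B) B :=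
      ((continuous_const.mul (continuous_pow 2)).mul continuous_const).intervalIntegrable _ _
    have hint2 : IntervalIntegrable (fun x : ℝ => deriv K (x*s) * s) volume (-B) B :=
      (hcK1.mul continuous_const).intervalIntegrable _ _
    have h := intervalIntegral.integral_mul_deriv_eq_deriv_mul hu hv hint1 hint2
    have e1 : (∫ x in (-B)..B, (x^3*s⁻¹) * (deriv K (x*s)*s))
        = ∫ x in (-B)..B, x^3 * deriv K (x*s) := by
      apply intervalIntegral.integral_congr
      intro x _
      field_simp
      try ring
    have e2 : (∫ x in (-B)..B, (3*x^2*s⁻¹)*K (x*s))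
        = (3*s⁻¹) * ∫ x in (-B)..B, x^2 * K (x*s) := by
      rw [← intervalIntegral.integral_const_mul]
      apply intervalIntegral.integral_congr
      intro x _
      ring
    rw [e1, e2] at h
    rw [h, hBs1, hBs2]
    ring
  -- second integration by parts
  have ibp2 : (∫ w in (-B)..B, w^4 * deriv (deriv K) (w*s))
      = -(4 * s⁻¹) * ∫ w in (-B)..B, w^3 * deriv K (w*s) := by
    have hu : ∀ x ∈ Set.uIcc (-B) B, HasDerivAt (fun w : ℝ => w^4 * s⁻¹) (4*x^3 * s⁻¹) x := by
      intro x _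
      have := (hasDerivAt_pow 4 x).mul_const s⁻¹
      exact this.congr_deriv (by push_cast; ring)
    have hv : ∀ x ∈ Set.uIcc (-B) B,
        HasDerivAt (fun w : ℝ => deriv K (w*s)) (deriv (deriv K) (x*s) * s) x :=
      fun x _ => by
        have h := (hKdd (x*s)).comp x ((hasDerivAt_id x).mul_const s)
        exact h.congr_deriv (by ring)
    have hint1 : IntervalIntegrable (fun x : ℝ => 4*x^3 * s⁻¹) volume (-B) B :=
      ((continuous_const.mul (continuous_pow 3)).mul continuous_const).intervalIntegrable _ _
    have hint2 : IntervalIntegrable (fun x : ℝ => deriv (deriv K) (x*s) * s) volume (-B) B :=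
      (hcK2.mul continuous_const).intervalIntegrable _ _
    have h := intervalIntegral.integral_mul_deriv_eq_deriv_mul hu hv hint1 hint2
    have e1 : (∫ x in (-B)..B, (x^4*s⁻¹) * (deriv (deriv K) (x*s)*s))
        = ∫ x in (-B)..B, x^4 * deriv (deriv K) (x*s) := by
      apply intervalIntegral.integral_congr
      intro x _
      field_simp
      try ring
    have e2 : (∫ x in (-B)..B, (4*x^3*s⁻¹)*(deriv K (x*s)))
        = (4*s⁻¹) * ∫ x in (-B)..B, x^3 * deriv K (x*s) := by
      rw [← intervalIntegral.integral_const_mul]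
      apply intervalIntegral.integral_congr
      intro x _
      ring
    rw [e1, e2] at h
    rw [h, hBs3, hBs4]
    ring
  -- assemble
  rw [intervalIntegral.integral_congr
      (g := fun w : ℝ => (6*s*p^2 + 3*s^2*c)*(w^2*K (w*s))
        + ((6*s^2*p^2 + s^3*c)*(w^3*deriv K (w*s)) + s^3*p^2*(w^4*deriv (deriv K) (w*s))))
      (fun w _ => by ring)]
  rw [intervalIntegral.integral_add (i2.const_mul _) ((i3.const_mul _).add (i4.const_mul _)),
    intervalIntegral.integral_add (i3.const_mul _) (i4.const_mul _),
    intervalIntegral.integral_const_mul, intervalIntegral.integral_const_mul,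
    intervalIntegral.integral_const_mul, ibp2, ibp1]
  field_simp
  try ring
end

section
/- Let f be a density with f(t) > 0 and f differentiable at all points, let K be C⁴ even with compact support in [-T,T], and set g_{t,w}(u) = f(t+u)^{3/2} K(w f(t+u)^{1/2}). If B ≥ T/f(t)^{1/2} and f is four times differentiable at t, then ∫_{-B}^{B} w⁴ g_{t,w}^{(4)}(0) dw = [24 f'(t)⁴/f(t)⁵ − 36 f'(t)² f''(t)/f(t)⁴ + (8 f'(t) f'''(t) + 6 f''(t)²)/f(t)³ − f^{(4)}(t)/f(t)²] · ∫ v⁴ K(v) dv. -/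
open MeasureTheory intervalIntegral

/-- Iterated derivative of a constant multiple, without differentiability assumptions. -/
lemma iteratedDeriv_const_mul'' (n : ℕ) (c : ℝ) (f : ℝ → ℝ) (x : ℝ) :
    iteratedDeriv n (fun y => c * f y) x = c * iteratedDeriv n f x := by
  induction n generalizing f x with
  | zero => simp
  | succ n ih =>
    rw [iteratedDeriv_succ', iteratedDeriv_succ', deriv_const_mul_field' c]
    exact ih _ _

lemma iteratedDeriv_zero_fun' (n : ℕ) (x : ℝ) :
    iteratedDeriv n (fun _ : ℝ => (0 : ℝ)) x = 0 := by
  induction n generalizing x with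
  | zero => simp
  | succ n ih => rw [iteratedDeriv_succ', deriv_const']; exact ih x

/-- Partial derivative in the first variable. -/
noncomputable def pd (G : ℝ × ℝ → ℝ) : ℝ × ℝ → ℝ := fun p => fderiv ℝ G p (1, 0)

lemma slice_hasDerivAt {G : ℝ × ℝ → ℝ} {s : Set ℝ} (hs : IsOpen s)
    {n : WithTop ℕ∞} (hn : 1 ≤ n) (hG : ContDiffOn ℝ n G (s ×ˢ Set.univ))
    {u : ℝ} (hu : u ∈ s) (w : ℝ) :
    HasDerivAt (fun u' => G (u', w)) (pd G (u, w)) u := by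
  have hopen : IsOpen (s ×ˢ (Set.univ : Set ℝ)) := hs.prod isOpen_univ
  have hmem : (u, w) ∈ s ×ˢ (Set.univ : Set ℝ) := ⟨hu, trivial⟩
  have hd : DifferentiableAt ℝ G (u, w) :=
    (hG.contDiffAt (hopen.mem_nhds hmem)).differentiableAt (lt_of_lt_of_le zero_lt_one hn).ne'
  have hline : HasDerivAt (fun u' : ℝ => ((u', w) : ℝ × ℝ)) ((1 : ℝ), (0 : ℝ)) u :=
    (hasDerivAt_id u).prodMk (hasDerivAt_const u w)
  exact hd.hasFDerivAt.comp_hasDerivAt u hline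

lemma pd_contDiffOn {G : ℝ × ℝ → ℝ} {s : Set ℝ} (hs : IsOpen s) {m : ℕ}
    (hG : ContDiffOn ℝ (m + 1 : ℕ) G (s ×ˢ Set.univ)) :
    ContDiffOn ℝ (m : ℕ) (pd G) (s ×ˢ Set.univ) := by
  have h1 : ContDiffOn ℝ (m : ℕ) (fderiv ℝ G) (s ×ˢ Set.univ) := by
    apply hG.fderiv_of_isOpen (hs.prod isOpen_univ)
    norm_cast
  exact h1.clm_apply contDiffOn_const

lemma pd_support {G : ℝ × ℝ → ℝ} {s : Set ℝ} (hs : IsOpen s)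
    {n : WithTop ℕ∞} (hn : 1 ≤ n) (hG : ContDiffOn ℝ n G (s ×ˢ Set.univ))
    {R : ℝ} (hsupp : ∀ u ∈ s, ∀ w : ℝ, R < |w| → G (u, w) = 0)
    {u : ℝ} (hu : u ∈ s) {w : ℝ} (hw : R < |w|) : pd G (u, w) = 0 := by
  have h0 := (slice_hasDerivAt hs hn hG hu w).deriv
  have heq : (fun u' => G (u', w)) =ᶠ[nhds u] fun _ => (0 : ℝ) :=
    Filter.eventuallyEq_of_mem (hs.mem_nhds hu) (fun u' hu' => hsupp u' hu' w hw)
  rw [← h0, heq.deriv_eq, deriv_const]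

lemma slice_continuous {G : ℝ × ℝ → ℝ} {s : Set ℝ}
    (hG : ContinuousOn G (s ×ˢ Set.univ)) {u : ℝ} (hu : u ∈ s) :
    Continuous (fun w => G (u, w)) := by
  have : (fun w => G (u, w)) = G ∘ (fun w : ℝ => ((u, w) : ℝ × ℝ)) := rfl
  rw [this]
  exact hG.comp_continuous (by fun_prop) (fun w => ⟨hu, trivial⟩)

lemma slice_integrable {G : ℝ × ℝ → ℝ} {s : Set ℝ}
    (hG : ContinuousOn G (s ×ˢ Set.univ)) {R : ℝ}
    (hsupp : ∀ u ∈ s, ∀ w : ℝ, R < |w| → G (u, w) = 0)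
    {u : ℝ} (hu : u ∈ s) :
    Integrable (fun w => G (u, w)) := by
  refine (slice_continuous hG hu).integrable_of_hasCompactSupport ?_
  refine HasCompactSupport.intro (isCompact_Icc (a := -R) (b := R)) ?_
  intro w hw
  refine hsupp u hu w ?_
  simp only [Set.mem_Icc, not_and_or, not_le] at hw
  rcases hw with h | h
  · exact lt_of_lt_of_le (by linarith) (neg_le_abs w)
  · exact lt_of_lt_of_le h (le_abs_self w)

lemma interchange_step {G : ℝ × ℝ → ℝ} {s : Set ℝ} (hs : IsOpen s)
    {n : WithTop ℕ∞} (hn : 1 ≤ n) (hG : ContDiffOn ℝ n G (s ×ˢ Set.univ))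
    {R : ℝ} (hsupp : ∀ u ∈ s, ∀ w : ℝ, R < |w| → G (u, w) = 0)
    {u₀ : ℝ} (hu₀ : u₀ ∈ s) :
    HasDerivAt (fun u => ∫ w, G (u, w)) (∫ w, pd G (u₀, w)) u₀ := by
  obtain ⟨ε, hε, hball⟩ := Metric.isOpen_iff.1 hs u₀ hu₀
  have hball2 : Metric.closedBall u₀ (ε / 2) ⊆ s :=
    (Metric.closedBall_subset_ball (by linarith)).trans hball
  have hballs : Metric.ball u₀ (ε / 2) ⊆ s :=
    (Metric.ball_subset_ball (by linarith)).trans hball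
  have hGc : ContinuousOn G (s ×ˢ Set.univ) := hG.continuousOn
  have hpdc : ContinuousOn (pd G) (s ×ˢ Set.univ) := by
    have h1 : ContinuousOn (fderiv ℝ G) (s ×ˢ Set.univ) :=
      hG.continuousOn_fderiv_of_isOpen (hs.prod isOpen_univ) hn
    exact h1.clm_apply continuousOn_const
  have hcpt : IsCompact (Metric.closedBall u₀ (ε / 2) ×ˢ Set.Icc (-R) R) :=
    (isCompact_closedBall _ _).prod isCompact_Icc
  have hsub : Metric.closedBall u₀ (ε / 2) ×ˢ Set.Icc (-R) R ⊆ s ×ˢ Set.univ :=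
    Set.prod_mono hball2 (Set.subset_univ _)
  obtain ⟨M, hM⟩ := hcpt.exists_bound_of_continuousOn (hpdc.mono hsub)
  have hpdsupp : ∀ u ∈ s, ∀ w : ℝ, R < |w| → pd G (u, w) = 0 :=
    fun u hu w hw => pd_support hs hn hG hsupp hu hw
  refine (_root_.hasDerivAt_integral_of_dominated_loc_of_deriv_le (F := fun u w => G (u, w))
    (F' := fun u w => pd G (u, w)) (bound := (Set.Icc (-R) R).indicator fun _ => M)
    (Metric.ball_mem_nhds u₀ (half_pos hε)) ?_ ?_ ?_ ?_ ?_ ?_).2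
  · filter_upwards [hs.mem_nhds hu₀] with u hu
    exact (slice_continuous hGc hu).aestronglyMeasurable
  · exact slice_integrable hGc hsupp hu₀
  · exact (slice_continuous (hpdc) hu₀ |>.aestronglyMeasurable)
  · refine Filter.Eventually.of_forall (fun w => fun u hu => ?_)
    by_cases hw : w ∈ Set.Icc (-R) R
    · rw [Set.indicator_of_mem hw]
      exact hM (u, w) ⟨Metric.ball_subset_closedBall hu, hw⟩
    · rw [Set.indicator_of_notMem hw]
      have hRw : R < |w| := by
        simp only [Set.mem_Icc, not_and_or, not_le] at hw
        rcases hw with h | h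
        · exact lt_of_lt_of_le (by linarith) (neg_le_abs w)
        · exact lt_of_lt_of_le h (le_abs_self w)
      simp only [hpdsupp u (hballs hu) w hRw, norm_zero, le_refl]
  · rw [MeasureTheory.integrable_indicator_iff measurableSet_Icc]
    exact integrableOn_const measure_Icc_lt_top.ne
  · refine Filter.Eventually.of_forall (fun w => fun u hu => ?_)
    exact slice_hasDerivAt hs hn hG (hballs hu) w

lemma iteratedDeriv_succ_of_eqOn {s : Set ℝ} (hs : IsOpen s) {X g h : ℝ → ℝ} {k : ℕ}
    (h1 : ∀ u ∈ s, iteratedDeriv k X u = g u)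
    (h2 : ∀ u ∈ s, HasDerivAt g (h u) u) :
    ∀ u ∈ s, iteratedDeriv (k + 1) X u = h u := by
  intro u hu
  rw [iteratedDeriv_succ]
  have heq : iteratedDeriv k X =ᶠ[nhds u] g :=
    Filter.eventuallyEq_of_mem (hs.mem_nhds hu) h1
  rw [heq.deriv_eq, (h2 u hu).deriv]

lemma interchange4 {G : ℝ × ℝ → ℝ} {s : Set ℝ} (hs : IsOpen s)
    (hG : ContDiffOn ℝ (4 : ℕ) G (s ×ˢ Set.univ))
    {R : ℝ} (hsupp : ∀ u ∈ s, ∀ w : ℝ, R < |w| → G (u, w) = 0)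
    (h0 : (0 : ℝ) ∈ s) :
    (∀ w, iteratedDeriv 4 (fun u => G (u, w)) 0 = pd (pd (pd (pd G))) (0, w)) ∧
      iteratedDeriv 4 (fun u => ∫ w, G (u, w)) 0 = ∫ w, pd (pd (pd (pd G))) (0, w) := by
  have hG3 : ContDiffOn ℝ (3 : ℕ) (pd G) (s ×ˢ Set.univ) := pd_contDiffOn hs (by exact_mod_cast hG)
  have hG2 : ContDiffOn ℝ (2 : ℕ) (pd (pd G)) (s ×ˢ Set.univ) :=
    pd_contDiffOn hs (by exact_mod_cast hG3)
  have hG1 : ContDiffOn ℝ (1 : ℕ) (pd (pd (pd G))) (s ×ˢ Set.univ) :=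
    pd_contDiffOn hs (by exact_mod_cast hG2)
  have n4 : (1 : WithTop ℕ∞) ≤ (4 : ℕ) := by norm_cast
  have n3 : (1 : WithTop ℕ∞) ≤ (3 : ℕ) := by norm_cast
  have n2 : (1 : WithTop ℕ∞) ≤ (2 : ℕ) := by norm_cast
  have n1 : (1 : WithTop ℕ∞) ≤ (1 : ℕ) := by norm_cast
  have hs1 : ∀ u ∈ s, ∀ w : ℝ, R < |w| → pd G (u, w) = 0 :=
    fun u hu w hw => pd_support hs n4 hG hsupp hu hw
  have hs2 : ∀ u ∈ s, ∀ w : ℝ, R < |w| → pd (pd G) (u, w) = 0 :=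
    fun u hu w hw => pd_support hs n3 hG3 hs1 hu hw
  have hs3 : ∀ u ∈ s, ∀ w : ℝ, R < |w| → pd (pd (pd G)) (u, w) = 0 :=
    fun u hu w hw => pd_support hs n2 hG2 hs2 hu hw
  constructor
  · intro w
    have c0 : ∀ u ∈ s, iteratedDeriv 0 (fun u => G (u, w)) u = G (u, w) := by
      intro u hu; simp
    have c1 := iteratedDeriv_succ_of_eqOn hs c0 (fun u hu => slice_hasDerivAt hs n4 hG hu w)
    have c2 := iteratedDeriv_succ_of_eqOn hs c1 (fun u hu => slice_hasDerivAt hs n3 hG3 hu w)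
    have c3 := iteratedDeriv_succ_of_eqOn hs c2 (fun u hu => slice_hasDerivAt hs n2 hG2 hu w)
    have c4 := iteratedDeriv_succ_of_eqOn hs c3 (fun u hu => slice_hasDerivAt hs n1 hG1 hu w)
    exact c4 0 h0
  · have c0 : ∀ u ∈ s, iteratedDeriv 0 (fun u => ∫ w, G (u, w)) u = ∫ w, G (u, w) := by
      intro u hu; simp
    have c1 := iteratedDeriv_succ_of_eqOn hs c0
      (fun u hu => interchange_step hs n4 hG hsupp hu)
    have c2 := iteratedDeriv_succ_of_eqOn hs c1
      (fun u hu => interchange_step hs n3 hG3 hs1 hu)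
    have c3 := iteratedDeriv_succ_of_eqOn hs c2
      (fun u hu => interchange_step hs n2 hG2 hs2 hu)
    have c4 := iteratedDeriv_succ_of_eqOn hs c3
      (fun u hu => interchange_step hs n1 hG1 hs3 hu)
    exact c4 0 h0

lemma inv_fourth_deriv (f : ℝ → ℝ) (C t : ℝ) (hf : ContDiff ℝ 4 f) (hft : 0 < f t) :
    iteratedDeriv 4 (fun x => C * (f x)⁻¹) t
      = (24 * (deriv f t) ^ 4 / f t ^ 5
          - 36 * (deriv f t) ^ 2 * deriv (deriv f) t / f t ^ 4
          + (8 * deriv f t * deriv (deriv (deriv f)) t + 6 * (deriv (deriv f) t) ^ 2) / f t ^ 3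
          - deriv (deriv (deriv (deriv f))) t / f t ^ 2) * C := by
  have e4 : (4 : WithTop ℕ∞) = 3 + 1 := by norm_cast
  have e3 : (3 : WithTop ℕ∞) = 2 + 1 := by norm_cast
  have e2 : (2 : WithTop ℕ∞) = 1 + 1 := by norm_cast
  have e1 : (1 : WithTop ℕ∞) = 0 + 1 := by norm_cast
  have hfc := hf
  rw [e4] at hfc
  obtain ⟨hd0, -, hf3⟩ := contDiff_succ_iff_deriv.mp hfc
  rw [e3] at hf3
  obtain ⟨hd1, -, hf2⟩ := contDiff_succ_iff_deriv.mp hf3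
  rw [e2] at hf2
  obtain ⟨hd2, -, hf1⟩ := contDiff_succ_iff_deriv.mp hf2
  rw [e1] at hf1
  obtain ⟨hd3, -, -⟩ := contDiff_succ_iff_deriv.mp hf1
  set f1 := deriv f
  set f2 := deriv f1
  set f3 := deriv f2
  set f4 := deriv f3
  set U : Set ℝ := {x | 0 < f x} with hU
  have hUopen : IsOpen U := isOpen_lt continuous_const hf.continuous
  have htU : t ∈ U := hft
  have hda : ∀ x, HasDerivAt f (f1 x) x := fun x => (hd0 x).hasDerivAt
  have hda1 : ∀ x, HasDerivAt f1 (f2 x) x := fun x => (hd1 x).hasDerivAt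
  have hda2 : ∀ x, HasDerivAt f2 (f3 x) x := fun x => (hd2 x).hasDerivAt
  have hda3 : ∀ x, HasDerivAt f3 (f4 x) x := fun x => (hd3 x).hasDerivAt
  have c0 : ∀ x ∈ U, iteratedDeriv 0 (fun x => C * (f x)⁻¹) x = C * (f x)⁻¹ := by
    intro x hx; simp
  have step1 : ∀ x ∈ U, HasDerivAt (fun x => C * (f x)⁻¹)
      (C * (-(f1 x) / f x ^ 2)) x := by
    intro x hx
    exact ((hda x).inv (ne_of_gt hx)).const_mul C
  have c1 := iteratedDeriv_succ_of_eqOn hUopen c0 step1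
  have step2 : ∀ x ∈ U, HasDerivAt (fun x => C * (-(f1 x) / f x ^ 2))
      (C * ((2 * f1 x ^ 2 - f x * f2 x) / f x ^ 3)) x := by
    intro x hx
    have hne : f x ^ 2 ≠ 0 := pow_ne_zero 2 (ne_of_gt hx)
    have h := (((hda1 x).neg).div ((hda x).pow 2) hne).const_mul C
    refine h.congr_deriv ?_
    have hfx : f x ≠ 0 := ne_of_gt hx
    simp only [Pi.div_apply, Pi.pow_apply, Pi.neg_apply, Pi.sub_apply, Pi.add_apply,
      Pi.mul_apply, Nat.reduceSub, Nat.cast_ofNat, pow_one]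
    field_simp
    ring
  have c2 := iteratedDeriv_succ_of_eqOn hUopen c1 step2
  have step3 : ∀ x ∈ U, HasDerivAt (fun x => C * ((2 * f1 x ^ 2 - f x * f2 x) / f x ^ 3))
      (C * ((-6 * f1 x ^ 3 + 6 * f x * f1 x * f2 x - f x ^ 2 * f3 x) / f x ^ 4)) x := by
    intro x hx
    have hne : f x ^ 3 ≠ 0 := pow_ne_zero 3 (ne_of_gt hx)
    have h := (((((hda1 x).pow 2).const_mul 2).sub ((hda x).mul (hda2 x))).div
      ((hda x).pow 3) hne).const_mul C
    refine h.congr_deriv ?_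
    have hfx : f x ≠ 0 := ne_of_gt hx
    simp only [Pi.div_apply, Pi.pow_apply, Pi.neg_apply, Pi.sub_apply, Pi.add_apply,
      Pi.mul_apply, Nat.reduceSub, Nat.cast_ofNat, pow_one]
    field_simp
    ring
  have c3 := iteratedDeriv_succ_of_eqOn hUopen c2 step3
  have step4 : ∀ x ∈ U, HasDerivAt
      (fun x => C * ((-6 * f1 x ^ 3 + 6 * f x * f1 x * f2 x - f x ^ 2 * f3 x) / f x ^ 4))
      (C * ((24 * f1 x ^ 4 - 36 * f x * f1 x ^ 2 * f2 x + 8 * f x ^ 2 * f1 x * f3 x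
          + 6 * f x ^ 2 * f2 x ^ 2 - f x ^ 3 * f4 x) / f x ^ 5)) x := by
    intro x hx
    have hne : f x ^ 4 ≠ 0 := pow_ne_zero 4 (ne_of_gt hx)
    have h1 := ((hda1 x).pow 3).const_mul (-6 : ℝ)
    have h2 := (((hda x).const_mul (6 : ℝ)).mul (hda1 x)).mul (hda2 x)
    have h3 := ((hda x).pow 2).mul (hda3 x)
    have h := (((h1.add h2).sub h3).div ((hda x).pow 4) hne).const_mul C
    refine h.congr_deriv ?_
    have hfx : f x ≠ 0 := ne_of_gt hx
    simp only [Pi.div_apply, Pi.pow_apply, Pi.neg_apply, Pi.sub_apply, Pi.add_apply,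
      Pi.mul_apply, Nat.reduceSub, Nat.cast_ofNat, pow_one]
    field_simp
    ring
  have c4 := iteratedDeriv_succ_of_eqOn hUopen c3 step4
  have hmain := c4 t htU
  rw [show (3 + 1 : ℕ) = 4 from rfl] at hmain
  rw [hmain]
  have hft' : f t ≠ 0 := ne_of_gt hft
  field_simp
  ring

/-- Fourth-order term of the bias of the ideal variable-bandwidth estimator:
with `g_{t,w}(u) = f(t+u)^{3/2} K(w f(t+u)^{1/2})`,
`∫_{-B}^{B} w⁴ g_{t,w}⁗(0) dw` equals an explicit differential expression in `f` at `t`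
times `∫ v⁴ K(v) dv`. -/
theorem fourth_order_bias_formula (f K : ℝ → ℝ) (T t B : ℝ)
    (hfmeas : Measurable f) (hfpos : ∀ x, 0 ≤ f x) (hfint : ∫ x, f x = 1)
    (hf : ContDiff ℝ 4 f) (hft : 0 < f t)
    (hK : ContDiff ℝ 4 K) (hKeven : ∀ x, K (-x) = K x)
    (hKpos : ∀ x, 0 ≤ K x) (hKint : ∫ x, K x = 1)
    (hKsupp : Function.support K ⊆ Set.Icc (-T) T)
    (hB : T / Real.sqrt (f t) ≤ B) :
    ∫ w in (-B)..B,
        w ^ 4 *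
          iteratedDeriv 4
            (fun u => (f (t + u)) ^ ((3:ℝ)/2) * K (w * Real.sqrt (f (t + u)))) 0
      = (24 * (deriv f t) ^ 4 / (f t) ^ 5
          - 36 * (deriv f t) ^ 2 * iteratedDeriv 2 f t / (f t) ^ 4
          + (8 * deriv f t * iteratedDeriv 3 f t + 6 * (iteratedDeriv 2 f t) ^ 2) / (f t) ^ 3
          - iteratedDeriv 4 f t / (f t) ^ 2)
        * ∫ v, v ^ 4 * K v := by
  classical
  set c := Real.sqrt (f t) with hc_def
  have hcpos : 0 < c := Real.sqrt_pos.mpr hft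
  -- T is positive
  have hT : 0 < T := by
    by_contra hcon
    push_neg at hcon
    have hnull : volume (Set.Icc (-T) T) = 0 := by
      rw [Real.volume_Icc]
      exact ENNReal.ofReal_eq_zero.mpr (by linarith)
    have hK0 : ∀ᵐ x : ℝ, K x = 0 := by
      rw [ae_iff]
      exact measure_mono_null hKsupp hnull
    have : (∫ x, K x) = 0 := integral_eq_zero_of_ae hK0
    rw [hKint] at this
    norm_num at this
  have hBpos : 0 < B := lt_of_lt_of_le (div_pos hT hcpos) hB
  set C := ∫ v : ℝ, v ^ 4 * K v with hC_def
  -- the open set where f (t+u) stays large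
  set s : Set ℝ := {u | f t / 2 < f (t + u)} with hs_def
  have hsopen : IsOpen s := by
    have : s = (fun u => f (t + u)) ⁻¹' Set.Ioi (f t / 2) := rfl
    rw [this]
    exact ((hf.continuous.comp (by continuity)).isOpen_preimage _ isOpen_Ioi)
  have h0s : (0 : ℝ) ∈ s := by
    simp only [hs_def, Set.mem_setOf_eq, add_zero]
    linarith
  have hhalfpos : 0 < f t / 2 := by linarith
  have hspos : ∀ u ∈ s, 0 < f (t + u) := fun u hu => lt_trans hhalfpos hu
  set R := T / Real.sqrt (f t / 2) with hR_def
  have hsq2 : 0 < Real.sqrt (f t / 2) := Real.sqrt_pos.mpr hhalfpos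
  -- K vanishes far out
  have hKzero : ∀ x : ℝ, T < |x| → K x = 0 := by
    intro x hx
    by_contra hne
    have hmem := hKsupp hne
    rw [Set.mem_Icc] at hmem
    have : |x| ≤ T := abs_le.mpr hmem
    linarith
  set G : ℝ × ℝ → ℝ :=
    fun p => p.2 ^ 4 * ((f (t + p.1)) ^ ((3:ℝ)/2) * K (p.2 * Real.sqrt (f (t + p.1))))
    with hG_def
  have hGsupp : ∀ u ∈ s, ∀ w : ℝ, R < |w| → G (u, w) = 0 := by
    intro u hu w hw
    have h1 : Real.sqrt (f t / 2) < Real.sqrt (f (t + u)) := Real.sqrt_lt_sqrt hhalfpos.le hu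
    have h2 : T < |w| * Real.sqrt (f (t + u)) := by
      have hTR : T = R * Real.sqrt (f t / 2) := by
        rw [hR_def]; field_simp
      rw [hTR]
      exact mul_lt_mul hw h1.le hsq2 (abs_nonneg w)
    have hKz : K (w * Real.sqrt (f (t + u))) = 0 := by
      apply hKzero
      rw [abs_mul, abs_of_nonneg (Real.sqrt_nonneg _)]
      exact h2
    simp only [hG_def, hKz, mul_zero]
  have hGsmooth : ContDiffOn ℝ (4 : ℕ) G (s ×ˢ Set.univ) := by
    intro p hp
    have hfu : 0 < f (t + p.1) := hspos p.1 hp.1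
    have hfu' : f (t + p.1) ≠ 0 := ne_of_gt hfu
    have hF1 : ContDiffAt ℝ (4 : ℕ) (fun q : ℝ × ℝ => f (t + q.1)) p := by
      have hfn : ContDiff ℝ (4 : ℕ) f := by exact_mod_cast hf
      exact ((hfn.comp (contDiff_const.add contDiff_id)).comp contDiff_fst).contDiffAt
    have hKn : ContDiff ℝ (4 : ℕ) K := by exact_mod_cast hK
    have hsnd : ContDiffAt ℝ (4 : ℕ) (fun q : ℝ × ℝ => q.2 ^ 4) p :=
      (contDiff_snd.pow 4).contDiffAt
    have hrpow : ContDiffAt ℝ (4 : ℕ) (fun q : ℝ × ℝ => f (t + q.1) ^ ((3:ℝ)/2)) p :=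
      hF1.rpow_const_of_ne hfu'
    have hsqrt : ContDiffAt ℝ (4 : ℕ) (fun q : ℝ × ℝ => Real.sqrt (f (t + q.1))) p :=
      hF1.sqrt hfu'
    have hinner : ContDiffAt ℝ (4 : ℕ)
        (fun q : ℝ × ℝ => q.2 * Real.sqrt (f (t + q.1))) p :=
      contDiff_snd.contDiffAt.mul hsqrt
    have hKc : ContDiffAt ℝ (4 : ℕ)
        (fun q : ℝ × ℝ => K (q.2 * Real.sqrt (f (t + q.1)))) p :=
      hKn.contDiffAt.comp p hinner
    exact (hsnd.mul (hrpow.mul hKc)).contDiffWithinAt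
  -- substitution: the w-integral is C / f (t+u)
  have hPhi : ∀ u ∈ s, (∫ w, G (u, w)) = C * (f (t + u))⁻¹ := by
    intro u hu
    set a := Real.sqrt (f (t + u)) with ha_def
    have hfu : 0 < f (t + u) := hspos u hu
    have hapos : 0 < a := Real.sqrt_pos.mpr hfu
    have ha' : a ≠ 0 := ne_of_gt hapos
    have ha2 : a ^ 2 = f (t + u) := Real.sq_sqrt hfu.le
    have hcube : f (t + u) ^ ((3:ℝ)/2) = a ^ (3:ℕ) := by
      rw [ha_def, Real.sqrt_eq_rpow, ← Real.rpow_natCast (f (t + u) ^ (1/(2:ℝ))) 3,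
        ← Real.rpow_mul hfu.le]
      norm_num
    have hGrw : ∀ w : ℝ, G (u, w) = a⁻¹ * ((fun v => v ^ 4 * K v) (a * w)) := by
      intro w
      simp only [hG_def, hcube]
      rw [mul_comm w a]
      field_simp
    simp_rw [hGrw]
    rw [MeasureTheory.integral_const_mul,
      MeasureTheory.Measure.integral_comp_mul_left (fun v => v ^ 4 * K v) a]
    rw [abs_of_pos (inv_pos.mpr hapos), smul_eq_mul]
    rw [← hC_def, show (C * (f (t + u))⁻¹ = C / f (t + u)) from (div_eq_mul_inv C _).symm,
      eq_div_iff (ne_of_gt hfu), ← ha2, pow_two]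
    field_simp
  -- the integrand vanishes for |w| > T/c
  have hzero : ∀ w : ℝ, T / c < |w| →
      w ^ 4 * iteratedDeriv 4
        (fun u => (f (t + u)) ^ ((3:ℝ)/2) * K (w * Real.sqrt (f (t + u)))) 0 = 0 := by
    intro w hw
    have hwc : T < |w| * c := (div_lt_iff₀ hcpos).mp hw
    set sw : Set ℝ := {u | T < |w| * Real.sqrt (f (t + u))} with hsw_def
    have hswopen : IsOpen sw := by
      have : sw = (fun u => |w| * Real.sqrt (f (t + u))) ⁻¹' Set.Ioi T := rfl
      rw [this]
      apply Continuous.isOpen_preimage _ _ isOpen_Ioi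
      exact continuous_const.mul ((Real.continuous_sqrt).comp (hf.continuous.comp (by continuity)))
    have h0sw : (0 : ℝ) ∈ sw := by
      simp only [hsw_def, Set.mem_setOf_eq, add_zero]
      exact hwc
    have hev : (fun u => (f (t + u)) ^ ((3:ℝ)/2) * K (w * Real.sqrt (f (t + u))))
        =ᶠ[nhds (0 : ℝ)] fun _ => (0 : ℝ) := by
      refine Filter.eventuallyEq_of_mem (hswopen.mem_nhds h0sw) ?_
      intro u hu
      have : K (w * Real.sqrt (f (t + u))) = 0 := by
        apply hKzero
        rw [abs_mul, abs_of_nonneg (Real.sqrt_nonneg _)]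
        exact hu
      simp [this]
    rw [hev.iteratedDeriv_eq 4, iteratedDeriv_zero_fun' 4 0, mul_zero]
  -- apply the interchange machinery
  obtain ⟨hper, hint⟩ := interchange4 hsopen hGsmooth hGsupp h0s
  set G4 : ℝ × ℝ → ℝ := pd (pd (pd (pd G))) with hG4_def
  -- pointwise identification of the integrand
  have hh : ∀ w : ℝ,
      w ^ 4 * iteratedDeriv 4
        (fun u => (f (t + u)) ^ ((3:ℝ)/2) * K (w * Real.sqrt (f (t + u)))) 0
      = G4 (0, w) := by
    intro w
    rw [← iteratedDeriv_const_mul'' 4 (w ^ 4)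
      (fun u => (f (t + u)) ^ ((3:ℝ)/2) * K (w * Real.sqrt (f (t + u)))) 0]
    exact hper w
  -- support and integrability of G4 (0, ·)
  have hG3 : ContDiffOn ℝ (3 : ℕ) (pd G) (s ×ˢ Set.univ) :=
    pd_contDiffOn hsopen (by exact_mod_cast hGsmooth)
  have hG2 : ContDiffOn ℝ (2 : ℕ) (pd (pd G)) (s ×ˢ Set.univ) :=
    pd_contDiffOn hsopen (by exact_mod_cast hG3)
  have hG1 : ContDiffOn ℝ (1 : ℕ) (pd (pd (pd G))) (s ×ˢ Set.univ) :=
    pd_contDiffOn hsopen (by exact_mod_cast hG2)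
  have hG0 : ContDiffOn ℝ (0 : ℕ) G4 (s ×ˢ Set.univ) :=
    pd_contDiffOn hsopen (by exact_mod_cast hG1)
  have n4 : (1 : WithTop ℕ∞) ≤ (4 : ℕ) := by norm_cast
  have n3 : (1 : WithTop ℕ∞) ≤ (3 : ℕ) := by norm_cast
  have n2 : (1 : WithTop ℕ∞) ≤ (2 : ℕ) := by norm_cast
  have n1 : (1 : WithTop ℕ∞) ≤ (1 : ℕ) := by norm_cast
  have hs1 : ∀ u ∈ s, ∀ w : ℝ, R < |w| → pd G (u, w) = 0 :=
    fun u hu w hw => pd_support hsopen n4 hGsmooth hGsupp hu hw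
  have hs2 : ∀ u ∈ s, ∀ w : ℝ, R < |w| → pd (pd G) (u, w) = 0 :=
    fun u hu w hw => pd_support hsopen n3 hG3 hs1 hu hw
  have hs3 : ∀ u ∈ s, ∀ w : ℝ, R < |w| → pd (pd (pd G)) (u, w) = 0 :=
    fun u hu w hw => pd_support hsopen n2 hG2 hs2 hu hw
  have hs4 : ∀ u ∈ s, ∀ w : ℝ, R < |w| → G4 (u, w) = 0 :=
    fun u hu w hw => pd_support hsopen n1 hG1 hs3 hu hw
  have hG4int : Integrable (fun w => G4 (0, w)) :=
    slice_integrable hG0.continuousOn hs4 h0s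
  have hG4zero : ∀ w : ℝ, B < |w| → G4 (0, w) = 0 := by
    intro w hw
    rw [← hh w]
    exact hzero w (lt_of_le_of_lt hB hw)
  have hae : ∀ᵐ (w : ℝ), w ≠ -B := by
    rw [ae_iff]
    simp only [not_not]
    have : {w : ℝ | w = -B} = {(-B : ℝ)} := by ext x; simp
    rw [this]
    exact measure_singleton _
  have key : (∫ w in (-B)..B,
      w ^ 4 * iteratedDeriv 4
        (fun u => (f (t + u)) ^ ((3:ℝ)/2) * K (w * Real.sqrt (f (t + u)))) 0)
      = ∫ w, G4 (0, w) := by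
    have h1 : (∫ w in (-B)..B,
        w ^ 4 * iteratedDeriv 4
          (fun u => (f (t + u)) ^ ((3:ℝ)/2) * K (w * Real.sqrt (f (t + u)))) 0)
        = ∫ w in (-B)..B, G4 (0, w) := by
      apply intervalIntegral.integral_congr
      intro w _
      exact hh w
    rw [h1, intervalIntegral.integral_of_le (by linarith : (-B : ℝ) ≤ B),
      ← MeasureTheory.integral_indicator measurableSet_Ioc]
    apply MeasureTheory.integral_congr_ae
    filter_upwards [hae] with w hwne
    by_cases hw : w ∈ Set.Ioc (-B) B
    · rw [Set.indicator_of_mem hw]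
    · rw [Set.indicator_of_notMem hw]
      have hBw : B < |w| := by
        simp only [Set.mem_Ioc, not_and_or, not_lt, not_le] at hw
        rcases hw with h | h
        · have hlt : w < -B := lt_of_le_of_ne h hwne
          exact lt_of_lt_of_le (by linarith) (neg_le_abs w)
        · exact lt_of_lt_of_le h (le_abs_self w)
      exact (hG4zero w hBw).symm
  rw [key, ← hint]
  have hev2 : (fun u => ∫ w, G (u, w)) =ᶠ[nhds (0 : ℝ)] fun u => C * (f (t + u))⁻¹ :=
    Filter.eventuallyEq_of_mem (hsopen.mem_nhds h0s) hPhi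
  rw [hev2.iteratedDeriv_eq 4]
  have hshift := congrFun (iteratedDeriv_comp_const_add 4 (fun x => C * (f x)⁻¹) t) 0
  rw [add_zero] at hshift
  have hstep : iteratedDeriv 4 (fun u => C * (f (t + u))⁻¹) 0
      = iteratedDeriv 4 (fun x => C * (f x)⁻¹) t := hshift
  rw [hstep, inv_fourth_deriv f C t hf hft]
  have hI2 : iteratedDeriv 2 f = deriv (deriv f) := by
    rw [iteratedDeriv_succ, iteratedDeriv_one]
  have hI3 : iteratedDeriv 3 f = deriv (deriv (deriv f)) := by
    rw [iteratedDeriv_succ, hI2]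
  have hI4 : iteratedDeriv 4 f = deriv (deriv (deriv (deriv f))) := by
    rw [iteratedDeriv_succ, hI3]
  rw [hI2, hI3, hI4]
end

section
/- Let f be a bounded density (‖f‖_∞ ≤ C) and K a bounded measurable function supported in [-T,T]. Then for every t ∈ ℝ and h > 0: (1/h) ∫ K²((t−x)/h · f(x)^{1/2}) f(x)² dx ≤ (8/3) T ‖K‖_∞² ‖f‖_∞^{3/2}. -/
open MeasureTheory Set

/-- Variance bound for the ideal variable-bandwidth estimator: for a bounded density `f`
(`f ≤ C`) and a bounded kernel `K` supported in `[-T,T]`,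
`(1/h) ∫ K²((t−x)/h √(f x)) f(x)² dx ≤ (8/3) T ‖K‖_∞² C^{3/2}`. -/
theorem variance_bound_ideal_estimator (K f : ℝ → ℝ) (T MK C : ℝ)
    (hKmeas : Measurable K) (hMK : ∀ x, |K x| ≤ MK)
    (hKsupp : Function.support K ⊆ Set.Icc (-T) T) (hT : 0 < T)
    (hfmeas : Measurable f) (hfpos : ∀ x, 0 ≤ f x) (hfint : ∫ x, f x = 1)
    (hfC : ∀ x, f x ≤ C) :
    ∀ (t : ℝ) (h : ℝ), 0 < h →
      (1 / h) * ∫ x, (K ((t - x) / h * Real.sqrt (f x))) ^ 2 * (f x) ^ 2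
        ≤ (8 / 3) * T * MK ^ 2 * C ^ ((3:ℝ)/2) := by
  intro t h hh
  -- C is positive
  have hC : 0 < C := by
    by_contra hc
    push_neg at hc
    have h0 : f = fun _ => (0:ℝ) :=
      funext fun x => le_antisymm ((hfC x).trans hc) (hfpos x)
    rw [h0] at hfint
    simp at hfint
  have hsC : 0 < Real.sqrt C := Real.sqrt_pos.mpr hC
  have hMK0 : 0 ≤ MK := (abs_nonneg _).trans (hMK 0)
  have hfInt : Integrable f := by
    by_contra hi
    rw [integral_undef hi] at hfint; norm_num at hfint
  set r : ℝ := T * h / Real.sqrt C with hr_def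
  have hr : 0 < r := div_pos (mul_pos hT hh) hsC
  set F : ℝ → ℝ := fun s => min (C ^ 2) (T ^ 4 * h ^ 4 / s ^ 4) with hF_def
  have hF_nonneg : ∀ s, 0 ≤ F s := fun s =>
    le_min (sq_nonneg C) (div_nonneg (by positivity) (by positivity))
  have hF_meas : Measurable F := by
    apply Measurable.min measurable_const
    exact Measurable.div measurable_const (measurable_id.pow_const 4)
  -- key rpow computations
  have hC32 : Real.sqrt C ^ 3 = C ^ ((3:ℝ)/2) := by
    rw [Real.sqrt_eq_rpow, ← Real.rpow_natCast (C ^ ((1:ℝ)/2)) 3,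
      ← Real.rpow_mul hC.le]
    norm_num
  have hC2 : C ^ 2 = C ^ ((3:ℝ)/2) * Real.sqrt C := by
    rw [Real.sqrt_eq_rpow, ← Real.rpow_add hC, ← Real.rpow_natCast C 2]
    norm_num
  have hrC : r * C ^ 2 = T * h * C ^ ((3:ℝ)/2) := by
    rw [hr_def, hC2]
    field_simp
  have hrpow : T ^ 4 * h ^ 4 * (r ^ (-3:ℝ) / 3) = (1/3) * (T * h * C ^ ((3:ℝ)/2)) := by
    have h1 : r ^ (-3:ℝ) = (r ^ (3:ℕ))⁻¹ := by
      rw [← Real.rpow_natCast r 3, ← Real.rpow_neg hr.le]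
      norm_num
    rw [h1, hr_def, div_pow, mul_pow]
    rw [← hC32]
    have hTh : (0:ℝ) < T ^ 3 * h ^ 3 := by positivity
    field_simp
  -- pointwise kernel-square bound
  have hK2 : ∀ y, (K y) ^ 2 ≤ MK ^ 2 := by
    intro y
    rw [← sq_abs]
    exact pow_le_pow_left₀ (abs_nonneg _) (hMK y) 2
  -- pointwise bound on the integrand
  have hptwise : ∀ x, x ≠ t →
      (K ((t - x) / h * Real.sqrt (f x))) ^ 2 * (f x) ^ 2 ≤ MK ^ 2 * F (x - t) := by
    intro x hx
    have hFx : 0 ≤ F (x - t) := hF_nonneg _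
    by_cases hK : K ((t - x) / h * Real.sqrt (f x)) = 0
    · rw [hK]
      have : (0:ℝ) ≤ MK ^ 2 * F (x - t) := mul_nonneg (sq_nonneg _) hFx
      simpa using this
    · have hmem : (t - x) / h * Real.sqrt (f x) ∈ Set.Icc (-T) T :=
        hKsupp (Function.mem_support.mpr hK)
      have habs : |(t - x) / h * Real.sqrt (f x)| ≤ T := abs_le.mpr ⟨hmem.1, hmem.2⟩
      have htx : (0:ℝ) < |t - x| := abs_pos.2 (sub_ne_zero.2 fun e => hx (by linarith [e] : x = t))
      have e1 : |t - x| / h * Real.sqrt (f x) ≤ T := by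
        rwa [abs_mul, abs_div, abs_of_pos hh, abs_of_nonneg (Real.sqrt_nonneg _)] at habs
      have e2 : Real.sqrt (f x) * |t - x| ≤ T * h := by
        have e1' : |t - x| * Real.sqrt (f x) / h ≤ T := by
          rwa [div_mul_eq_mul_div] at e1
        have := (div_le_iff₀ hh).mp e1'
        linarith
      have e3 : f x * (x - t) ^ 2 ≤ T ^ 2 * h ^ 2 := by
        have hmm := mul_self_le_mul_self
          (mul_nonneg (Real.sqrt_nonneg _) (abs_nonneg _)) e2
        have heq : (Real.sqrt (f x) * |t - x|) * (Real.sqrt (f x) * |t - x|)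
            = f x * (x - t) ^ 2 := by
          rw [mul_mul_mul_comm, Real.mul_self_sqrt (hfpos x), abs_mul_abs_self]
          ring
        calc f x * (x - t) ^ 2 = _ := heq.symm
          _ ≤ (T * h) * (T * h) := hmm
          _ = T ^ 2 * h ^ 2 := by ring
      have hxt4 : (0:ℝ) < (x - t) ^ 4 := by
        have : x - t ≠ 0 := sub_ne_zero.2 hx
        positivity
      have hfx4 : (f x) ^ 2 ≤ T ^ 4 * h ^ 4 / (x - t) ^ 4 := by
        rw [le_div_iff₀ hxt4]
        have e4 := mul_self_le_mul_self (mul_nonneg (hfpos x) (sq_nonneg (x - t))) e3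
        calc (f x) ^ 2 * (x - t) ^ 4
            = (f x * (x - t) ^ 2) * (f x * (x - t) ^ 2) := by ring
          _ ≤ (T ^ 2 * h ^ 2) * (T ^ 2 * h ^ 2) := e4
          _ = T ^ 4 * h ^ 4 := by ring
      have hfC2 : (f x) ^ 2 ≤ C ^ 2 := pow_le_pow_left₀ (hfpos x) (hfC x) 2
      have hmin : (f x) ^ 2 ≤ F (x - t) := le_min hfC2 hfx4
      exact mul_le_mul (hK2 _) hmin (sq_nonneg _) (sq_nonneg _)
  -- integrability of F on pieces
  have hpsi_int : IntegrableOn (fun y : ℝ => T ^ 4 * h ^ 4 * y ^ (-4:ℝ)) (Ioi r) :=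
    (integrableOn_Ioi_rpow_of_lt (by norm_num) hr).const_mul _
  have hrpow_eq : ∀ x : ℝ, 0 < x → x ^ (-4:ℝ) = (x ^ (4:ℕ))⁻¹ := by
    intro x hx
    rw [← Real.rpow_natCast x 4, ← Real.rpow_neg hx.le]
    norm_num
  have hF_int_Ioi : IntegrableOn F (Ioi r) := by
    refine Integrable.mono' hpsi_int hF_meas.aestronglyMeasurable ?_
    refine (ae_restrict_iff' measurableSet_Ioi).mpr (ae_of_all _ fun x hx => ?_)
    have hx0 : 0 < x := hr.trans hx
    rw [Real.norm_eq_abs, abs_of_nonneg (hF_nonneg x)]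
    calc F x ≤ T ^ 4 * h ^ 4 / x ^ 4 := min_le_right _ _
      _ = T ^ 4 * h ^ 4 * x ^ (-4:ℝ) := by
          rw [hrpow_eq x hx0, div_eq_mul_inv]
  have hF_int_Ioc : IntegrableOn F (Ioc 0 r) := by
    have hconst : IntegrableOn (fun _ : ℝ => C ^ 2) (Ioc 0 r) :=
      (integrableOn_const_iff).mpr (Or.inr measure_Ioc_lt_top)
    refine Integrable.mono' hconst
      hF_meas.aestronglyMeasurable (ae_of_all _ fun x => ?_)
    rw [Real.norm_eq_abs, abs_of_nonneg (hF_nonneg x)]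
    exact min_le_left _ _
  have hF_int_Ioi0 : IntegrableOn F (Ioi 0) := by
    rw [← Ioc_union_Ioi_eq_Ioi hr.le]
    exact hF_int_Ioc.union hF_int_Ioi
  -- evenness
  have hFeven : ∀ y : ℝ, F (-y) = F y := by
    intro y
    simp only [hF_def]
    congr 1
    rw [show (-y) ^ 4 = y ^ 4 by ring]
  have hF_int : Integrable F := by
    have hIic : IntegrableOn F (Iic 0) := by
      have hemb : MeasurableEmbedding fun x : ℝ => -x :=
        (Homeomorph.neg ℝ).measurableEmbedding
      have key : IntegrableOn F (Iic 0) (Measure.map (fun x : ℝ => -x) volume) := by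
        rw [hemb.integrableOn_map_iff]
        have hpre : (fun x : ℝ => -x) ⁻¹' Iic 0 = Ici 0 := by ext x; simp
        have hcomp : (F ∘ fun x : ℝ => -x) = F := funext fun y => hFeven y
        rw [hpre, hcomp]
        exact (integrableOn_Ici_iff_integrableOn_Ioi).mpr hF_int_Ioi0
      rwa [show Measure.map (fun x : ℝ => -x) volume = volume from
        Measure.map_neg_eq_self (volume : Measure ℝ)] at key
    have : IntegrableOn F (Iic 0 ∪ Ioi 0) := hIic.union hF_int_Ioi0
    rwa [Iic_union_Ioi, integrableOn_univ] at this
  -- bound the integral of F over (0,∞)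
  have hIoi0_bound : ∫ y in Ioi 0, F y ≤ (4/3) * (T * h * C ^ ((3:ℝ)/2)) := by
    rw [← Ioc_union_Ioi_eq_Ioi hr.le,
      setIntegral_union (Ioc_disjoint_Ioi le_rfl) measurableSet_Ioi hF_int_Ioc hF_int_Ioi]
    have h1 : ∫ y in Ioc 0 r, F y ≤ ∫ _y in Ioc 0 r, C ^ 2 := by
      refine setIntegral_mono_on hF_int_Ioc ((integrableOn_const_iff).mpr (Or.inr measure_Ioc_lt_top))
        measurableSet_Ioc fun x _ => min_le_left _ _
    have h1' : ∫ _y in Ioc 0 r, (C:ℝ) ^ 2 = r * C ^ 2 := by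
      rw [setIntegral_const, Real.volume_real_Ioc_of_le hr.le, smul_eq_mul]
      ring
    have h2 : ∫ y in Ioi r, F y ≤ ∫ y in Ioi r, T ^ 4 * h ^ 4 * y ^ (-4:ℝ) := by
      refine setIntegral_mono_on hF_int_Ioi hpsi_int measurableSet_Ioi fun x hx => ?_
      have hx0 : 0 < x := hr.trans hx
      calc F x ≤ T ^ 4 * h ^ 4 / x ^ 4 := min_le_right _ _
        _ = T ^ 4 * h ^ 4 * x ^ (-4:ℝ) := by rw [hrpow_eq x hx0, div_eq_mul_inv]
    have h2' : ∫ y in Ioi r, T ^ 4 * h ^ 4 * y ^ (-4:ℝ)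
        = T ^ 4 * h ^ 4 * (r ^ (-3:ℝ) / 3) := by
      rw [integral_const_mul, integral_Ioi_rpow_of_lt (by norm_num) hr]
      norm_num
    rw [h1'] at h1
    rw [h2', hrpow] at h2
    rw [hrC] at h1
    linarith
  -- integral of F over ℝ
  have hFall : ∫ y, F y ≤ (8/3) * (T * h * C ^ ((3:ℝ)/2)) := by
    have habs : ∫ y, F y = 2 * ∫ y in Ioi (0:ℝ), F y := by
      rw [← integral_comp_abs (f := F)]
      refine integral_congr_ae (ae_of_all _ fun y => ?_)
      show F y = F |y|
      rcases abs_choice y with hy | hy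
      · rw [hy]
      · rw [hy, hFeven]
    rw [habs]
    linarith
  -- the integrand and its integrability
  set g : ℝ → ℝ := fun x => (K ((t - x) / h * Real.sqrt (f x))) ^ 2 * (f x) ^ 2 with hg_def
  have hg_meas : Measurable g := by
    apply Measurable.mul _ (hfmeas.pow_const 2)
    exact (hKmeas.comp (((measurable_const.sub measurable_id).div_const h).mul
      hfmeas.sqrt)).pow_const 2
  have hg_int : Integrable g := by
    refine Integrable.mono' ((hfInt.const_mul (MK ^ 2 * C)))
      hg_meas.aestronglyMeasurable (ae_of_all _ fun x => ?_)
    rw [Real.norm_eq_abs, abs_of_nonneg (by positivity)]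
    calc g x ≤ MK ^ 2 * (f x) ^ 2 :=
          mul_le_mul_of_nonneg_right (hK2 _) (sq_nonneg _)
      _ ≤ MK ^ 2 * (C * f x) := by
          have : (f x) ^ 2 ≤ C * f x := by nlinarith [hfpos x, hfC x]
          exact mul_le_mul_of_nonneg_left this (sq_nonneg _)
      _ = MK ^ 2 * C * f x := by ring
  have hQ_int : Integrable (fun x => MK ^ 2 * F (x - t)) :=
    (hF_int.comp_sub_right t).const_mul _
  have hae : ∀ᵐ x : ℝ, g x ≤ MK ^ 2 * F (x - t) := by
    have hne : ∀ᵐ x : ℝ, x ≠ t := by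
      refine ae_iff.mpr ?_
      have : {x : ℝ | ¬x ≠ t} = {t} := by ext x; simp
      rw [this, Real.volume_singleton]
    filter_upwards [hne] with x hx
    exact hptwise x hx
  have hmain : ∫ x, g x ≤ (8/3) * (T * h * C ^ ((3:ℝ)/2)) * MK ^ 2 := by
    calc ∫ x, g x ≤ ∫ x, MK ^ 2 * F (x - t) := integral_mono_ae hg_int hQ_int hae
      _ = MK ^ 2 * ∫ x, F (x - t) := integral_const_mul _ _
      _ = MK ^ 2 * ∫ y, F y := by rw [integral_sub_right_eq_self F t]
      _ ≤ MK ^ 2 * ((8/3) * (T * h * C ^ ((3:ℝ)/2))) := by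
          exact mul_le_mul_of_nonneg_left hFall (sq_nonneg _)
      _ = (8/3) * (T * h * C ^ ((3:ℝ)/2)) * MK ^ 2 := by ring
  have hgoal : (1 / h) * ∫ x, g x ≤ (8 / 3) * T * MK ^ 2 * C ^ ((3:ℝ)/2) := by
    have h1h : (0:ℝ) < 1 / h := by positivity
    calc (1 / h) * ∫ x, g x ≤ (1 / h) * ((8/3) * (T * h * C ^ ((3:ℝ)/2)) * MK ^ 2) :=
          mul_le_mul_of_nonneg_left hmain h1h.le
      _ = (8 / 3) * T * MK ^ 2 * C ^ ((3:ℝ)/2) := by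
          field_simp
  exact hgoal
end
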